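/- For every integer m ≥ 1, the chromatic symmetric function of the tadpole graph T^{3,m} satisfies X_{T^{3,m}} = 2 X_{P_{m+3}} − X_{C_2} · X_{P_{m+1}}, where X_{C_2} = 2 e_2 is the chromatic symmetric function of a single edge K_2. -/

import Mathlib

open scoped BigOperators

/-- The chromatic symmetric function `X_G` of a finite simple graph `G`, as a formal
power series in countably many commuting variables `x_0, x_1, x_2, …` (the colors are
the natural numbers): the coefficient of the monomial `∏ i, x_i ^ (d i)` is the number
of proper colorings `κ : V → ℕ` whose color fibers have the sizes prescribed by `d`. -/
noncomputable def csf {V : Type} [Fintype V] (G : SimpleGraph V) : MvPowerSeries ℕ ℚ :=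
  fun d => (Nat.card {κ : V → ℕ // (∀ a b : V, G.Adj a b → κ a ≠ κ b) ∧
      ∀ i : ℕ, Nat.card {v : V // κ v = i} = d i} : ℚ)

/- The elementary symmetric function `e_k`, as a formal power series:
the sum of all squarefree monomials of total degree `k`. -/
open Classical in
noncomputable def esym (k : ℕ) : MvPowerSeries ℕ ℚ :=
  fun d => if (∀ i, d i ≤ 1) ∧ (d.sum fun _ e => e) = k then 1 else 0

/-- The path `P_n` on the `n` vertices `0, 1, …, n-1`, with edges `{i, i+1}`. -/
def path (n : ℕ) : SimpleGraph (Fin n) :=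
  SimpleGraph.fromRel (fun i j => (i : ℕ) + 1 = (j : ℕ))

/-- The cycle `C_n` on the `n` vertices `0, 1, …, n-1`, with edges `{i, i+1 mod n}`
(for `n = 2` this is the single edge `K_2`). -/
def cycle (n : ℕ) : SimpleGraph (Fin n) :=
  SimpleGraph.fromRel (fun i j => ((i : ℕ) + 1) % n = (j : ℕ))

/-- The tadpole graph `T^{a,b}` on `a + b` vertices: the cycle `C_a` on the vertices
`0, …, a-1` (consecutive vertices adjacent, together with the closing edge `{0, a-1}`)
and the path `P_b` on the vertices `a, …, a+b-1`, joined by the edge `{a-1, a}`.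
Here vertex `i - 1` plays the role of the vertex `v_i` of the paper. -/
def tadpole (a b : ℕ) : SimpleGraph (Fin (a + b)) :=
  SimpleGraph.fromRel (fun i j => (i : ℕ) + 1 = (j : ℕ) ∨ ((i : ℕ) = 0 ∧ (j : ℕ) = a - 1))

/-!
Let `P` be the path `0, 1, …, m + 2` and `Y` the generating function of its proper colorings with
`κ 0 = κ 2`. The proper colorings of `P` with `κ 0 ≠ κ 2` are those of `P + {0, 2} ≅ T^{3,m}`,
so `X_P = X_T + Y`. Deleting the edge `{1, 2}` gives `D ≅ K_2 ⊔ P_{m+1}`. Proper colorings of `D`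
with `κ 0 ≠ κ 2` are those of `D + {0, 2}`, which is again a path, while those with
`κ 0 = κ 2` automatically have `κ 1 ≠ κ 0 = κ 2`, i.e. are counted by `Y`; hence
`X_{K_2} X_{P_{m+1}} = X_D = X_P + Y`, and eliminating `Y` gives the identity.
Finally `X_{K_n} = n! e_n`, since the proper colorings of `K_n` are the injective ones.
-/

open Finset SimpleGraph

section ColorSeries

variable {V W : Type} [Fintype V] [Fintype W]

noncomputable def colorDegree (κ : V → ℕ) : ℕ →₀ ℕ := Multiset.toFinsupp (univ.val.map κ)

theorem colorDegree_apply (κ : V → ℕ) (i : ℕ) : colorDegree κ i = Nat.card {v // κ v = i} := by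
  classical
  rw [colorDegree, Multiset.toFinsupp_apply, Multiset.count_map, Nat.card_eq_fintype_card,
    Fintype.card_subtype]
  simp only [eq_comm (a := i)]
  rfl

theorem colorDegree_sum_elim (κ : V ⊕ W → ℕ) :
    colorDegree κ = colorDegree (κ ∘ Sum.inl) + colorDegree (κ ∘ Sum.inr) := by
  ext i
  simp only [colorDegree_apply, Finsupp.add_apply, Function.comp_apply, ← Nat.card_sum]
  exact Nat.card_congr Equiv.subtypeSum

theorem colorDegree_comp_equiv (e : V ≃ W) (κ : W → ℕ) : colorDegree (κ ∘ e) = colorDegree κ := by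
  ext i
  simp only [colorDegree_apply, Function.comp_apply]
  exact Nat.card_congr (e.subtypeEquiv fun _ => Iff.rfl)

theorem colorDegree_sum (κ : V → ℕ) : (colorDegree κ).sum (fun _ e => e) = Fintype.card V :=
  (Multiset.toFinsupp_sum_eq _).trans (by simp)

theorem mem_support_colorDegree (κ : V → ℕ) (v : V) : κ v ∈ (colorDegree κ).support := by
  rw [Finsupp.mem_support_iff, colorDegree_apply]
  have : Nonempty {w // κ w = κ v} := ⟨⟨v, rfl⟩⟩
  exact Nat.card_pos.ne'

instance (P : (V → ℕ) → Prop) (d : ℕ →₀ ℕ) :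
    Finite {κ : V → ℕ // P κ ∧ colorDegree κ = d} :=
  Finite.of_injective (β := V → d.support)
    (fun κ v => ⟨κ.1 v, by obtain ⟨κ, -, rfl⟩ := κ; exact mem_support_colorDegree κ v⟩)
    fun κ κ' h => Subtype.ext <| funext fun v => congrArg Subtype.val (congrFun h v)

/-- `colorSeries P = ∑_{κ : V → ℕ, P κ} ∏_v x_{κ v}`; `colorDegree κ` is the exponent of
`∏_v x_{κ v}`. -/
noncomputable def colorSeries (P : (V → ℕ) → Prop) : MvPowerSeries ℕ ℚ :=
  fun d => Nat.card {κ : V → ℕ // P κ ∧ colorDegree κ = d}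

theorem coeff_colorSeries (P : (V → ℕ) → Prop) (d : ℕ →₀ ℕ) :
    MvPowerSeries.coeff d (colorSeries P) = Nat.card {κ : V → ℕ // P κ ∧ colorDegree κ = d} :=
  rfl

theorem colorSeries_eq_add (P Q : (V → ℕ) → Prop) :
    colorSeries P = colorSeries (fun κ => P κ ∧ Q κ) + colorSeries (fun κ => P κ ∧ ¬ Q κ) := by
  classical
  ext d
  simp only [coeff_colorSeries, map_add, ← Nat.cast_add, ← Nat.card_sum]
  refine congrArg _ (Nat.card_congr ?_)
  refine (Equiv.sumCompl fun κ : {κ // P κ ∧ colorDegree κ = d} => Q κ).symm.trans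
    (Equiv.sumCongr ?_ ?_)
  · exact (Equiv.subtypeSubtypeEquivSubtypeInter (fun κ => P κ ∧ colorDegree κ = d) Q).trans
      (Equiv.subtypeEquivRight fun κ => by tauto)
  · exact (Equiv.subtypeSubtypeEquivSubtypeInter (fun κ => P κ ∧ colorDegree κ = d) (¬ Q ·)).trans
      (Equiv.subtypeEquivRight fun κ => by tauto)

theorem colorSeries_comp_equiv (e : V ≃ W) (P : (V → ℕ) → Prop) :
    colorSeries (fun κ : W → ℕ => P (κ ∘ e)) = colorSeries P := by
  ext d
  simp only [coeff_colorSeries]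
  refine congrArg _ (Nat.card_congr ((e.arrowCongr (Equiv.refl ℕ)).subtypeEquiv fun κ => ?_)).symm
  have : e.arrowCongr (Equiv.refl ℕ) κ ∘ e = κ := by ext; simp [Equiv.arrowCongr_apply]
  rw [this, ← colorDegree_comp_equiv e, this]

noncomputable def coloringsSumEquiv (P : (V → ℕ) → Prop) (Q : (W → ℕ) → Prop) (d : ℕ →₀ ℕ) :
    {κ : V ⊕ W → ℕ // (P (κ ∘ Sum.inl) ∧ Q (κ ∘ Sum.inr)) ∧ colorDegree κ = d} ≃
      Σ q : antidiagonal d,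
        {κ // P κ ∧ colorDegree κ = q.1.1} × {κ // Q κ ∧ colorDegree κ = q.1.2} where
  toFun κ := ⟨⟨(colorDegree (κ.1 ∘ Sum.inl), colorDegree (κ.1 ∘ Sum.inr)), by
      rw [HasAntidiagonal.mem_antidiagonal, ← colorDegree_sum_elim]; exact κ.2.2⟩,
    ⟨κ.1 ∘ Sum.inl, κ.2.1.1, rfl⟩, ⟨κ.1 ∘ Sum.inr, κ.2.1.2, rfl⟩⟩
  invFun x := ⟨Sum.elim x.2.1.1 x.2.2.1, ⟨x.2.1.2.1, x.2.2.2.1⟩, by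
    rw [colorDegree_sum_elim, Sum.elim_comp_inl, Sum.elim_comp_inr, x.2.1.2.2, x.2.2.2.2]
    exact HasAntidiagonal.mem_antidiagonal.1 x.1.2⟩
  left_inv κ := Subtype.ext (Sum.elim_comp_inl_inr κ.1)
  right_inv := by
    rintro ⟨⟨⟨_, _⟩, _⟩, ⟨κ₁, _, h₁⟩, ⟨κ₂, _, h₂⟩⟩
    dsimp only at h₁ h₂
    subst h₁ h₂
    rfl

theorem colorSeries_mul (P : (V → ℕ) → Prop) (Q : (W → ℕ) → Prop) :
    colorSeries P * colorSeries Q =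
      colorSeries (fun κ : V ⊕ W → ℕ => P (κ ∘ Sum.inl) ∧ Q (κ ∘ Sum.inr)) := by
  ext d
  rw [MvPowerSeries.coeff_mul, coeff_colorSeries, Nat.card_congr (coloringsSumEquiv P Q d),
    Nat.card_sigma, ← Finset.sum_coe_sort, Nat.cast_sum]
  simp only [Nat.card_prod, Nat.cast_mul, coeff_colorSeries]

end ColorSeries

section Graphs
variable {V W : Type}

def IsProperColoring (G : SimpleGraph V) (κ : V → ℕ) : Prop :=
  ∀ a b, G.Adj a b → κ a ≠ κ b

theorem isProperColoring_top_iff (κ : V → ℕ) :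
    IsProperColoring (⊤ : SimpleGraph V) κ ↔ Function.Injective κ := by
  simp [IsProperColoring, Function.injective_iff_pairwise_ne, Pairwise]

theorem csf_eq_colorSeries [Fintype V] (G : SimpleGraph V) :
    csf G = colorSeries (IsProperColoring G) := by
  ext d
  refine congrArg Nat.cast (Nat.card_congr (Equiv.subtypeEquivRight fun κ => ?_))
  simp only [IsProperColoring, Finsupp.ext_iff, colorDegree_apply]

theorem isProperColoring_sup_edge_iff {G : SimpleGraph V} {u v : V} (huv : u ≠ v) (κ : V → ℕ) :
    IsProperColoring (G ⊔ edge u v) κ ↔ IsProperColoring G κ ∧ κ u ≠ κ v := by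
  refine ⟨fun h => ⟨fun a b hab => h a b (Or.inl hab), h u v (Or.inr ?_)⟩, ?_⟩
  · exact (edge_adj ..).2 ⟨Or.inl ⟨rfl, rfl⟩, huv⟩
  · rintro ⟨hG, huv'⟩ a b (hab | hab)
    · exact hG a b hab
    · obtain ⟨⟨rfl, rfl⟩ | ⟨rfl, rfl⟩, -⟩ := (edge_adj ..).1 hab
      exacts [huv', huv'.symm]

theorem csf_eq_csf_sup_edge_add [Fintype V] (G : SimpleGraph V) {u v : V} (huv : u ≠ v) :
    csf G = csf (G ⊔ edge u v) + colorSeries (fun κ => IsProperColoring G κ ∧ κ u = κ v) := by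
  rw [csf_eq_colorSeries, csf_eq_colorSeries, colorSeries_eq_add _ (fun κ => κ u ≠ κ v)]
  simp_rw [not_not, ← isProperColoring_sup_edge_iff huv]

theorem colorSeries_sup_edge_of_adj [Fintype V] {G : SimpleGraph V} {u v w : V}
    (h : G.Adj u w) :
    colorSeries (fun κ => IsProperColoring (G ⊔ edge w v) κ ∧ κ u = κ v) =
      colorSeries (fun κ => IsProperColoring G κ ∧ κ u = κ v) := by
  congr! 2 with κ
  refine ⟨fun ⟨hκ, huv⟩ => ⟨fun a b hab => hκ a b (Or.inl hab), huv⟩, fun ⟨hκ, huv⟩ => ⟨?_, huv⟩⟩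
  rintro a b (hab | hab)
  · exact hκ a b hab
  · obtain ⟨⟨rfl, rfl⟩ | ⟨rfl, rfl⟩, -⟩ := (edge_adj ..).1 hab
    · exact huv ▸ (hκ u a h).symm
    · exact huv ▸ hκ u b h

theorem csf_congr [Fintype V] [Fintype W] {G : SimpleGraph V} {H : SimpleGraph W} (e : G ≃g H) :
    csf G = csf H := by
  rw [csf_eq_colorSeries, csf_eq_colorSeries, ← colorSeries_comp_equiv e.toEquiv]
  congr! 2 with κ
  exact ⟨fun h a b hab => by simpa using h (e.symm a) (e.symm b) (e.symm.map_adj_iff.2 hab),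
    fun h a b hab => h (e a) (e b) (e.map_adj_iff.2 hab)⟩

theorem csf_sum [Fintype V] [Fintype W] (G : SimpleGraph V) (H : SimpleGraph W) :
    csf (G ⊕g H) = csf G * csf H := by
  rw [csf_eq_colorSeries, csf_eq_colorSeries, csf_eq_colorSeries, colorSeries_mul]
  congr! 2 with κ
  refine ⟨fun h => ⟨fun a b hab => h (.inl a) (.inl b) hab,
    fun a b hab => h (.inr a) (.inr b) hab⟩, ?_⟩
  rintro ⟨hG, hH⟩ (a | a) (b | b) hab
  · exact hG a b hab
  · simp at hab
  · simp at hab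
  · exact hH a b hab

end Graphs

section CompleteGraph
variable {V : Type} [Fintype V]

theorem colorDegree_le_one_of_injective {κ : V → ℕ} (hκ : Function.Injective κ) (i : ℕ) :
    colorDegree κ i ≤ 1 := by
  rw [colorDegree_apply, Finite.card_le_one_iff_subsingleton]
  exact ⟨fun a b => Subtype.ext (hκ (a.2.trans b.2.symm))⟩

theorem colorDegree_val_comp_equiv {d : ℕ →₀ ℕ} (hd : ∀ i, d i ≤ 1) (e : V ≃ d.support) :
    colorDegree (fun v => (e v : ℕ)) = d := by
  ext i
  rw [colorDegree_apply]
  by_cases hi : i ∈ d.support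
  · refine Nat.card_eq_one_iff_unique.2 ⟨⟨fun a b => Subtype.ext (e.injective ?_)⟩, ?_⟩ |>.trans
      (le_antisymm (hd i) (Nat.one_le_iff_ne_zero.2 (Finsupp.mem_support_iff.1 hi))).symm
    · exact Subtype.ext (a.2.trans b.2.symm)
    · exact ⟨⟨e.symm ⟨i, hi⟩, by simp⟩⟩
  · rw [Finsupp.notMem_support_iff.1 hi]
    have : IsEmpty {v // (e v : ℕ) = i} := ⟨fun v => hi (v.2 ▸ (e v.1).2)⟩
    exact Nat.card_of_isEmpty

noncomputable def injectiveColoringsEquiv {d : ℕ →₀ ℕ} (hd : ∀ i, d i ≤ 1) :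
    {κ : V → ℕ // Function.Injective κ ∧ colorDegree κ = d} ≃ (V ≃ d.support) where
  toFun κ := Equiv.ofBijective
    (fun v => ⟨κ.1 v, by obtain ⟨κ, -, rfl⟩ := κ; exact mem_support_colorDegree κ v⟩)
    ⟨fun a b h => κ.2.1 (congrArg Subtype.val h), fun i => by
      obtain ⟨κ, -, rfl⟩ := κ
      have hi := Finsupp.mem_support_iff.1 i.2
      rw [colorDegree_apply, Nat.card_ne_zero] at hi
      obtain ⟨v, hv⟩ := hi.1.some
      exact ⟨v, Subtype.ext hv⟩⟩
  invFun e :=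
    ⟨fun v => e v, Subtype.val_injective.comp e.injective, colorDegree_val_comp_equiv hd e⟩
  left_inv κ := rfl
  right_inv e := Equiv.ext fun _ => rfl

theorem csf_top : csf (⊤ : SimpleGraph V) = (Fintype.card V).factorial • esym (Fintype.card V) := by
  classical
  ext d
  rw [csf_eq_colorSeries, coeff_colorSeries, map_nsmul, MvPowerSeries.coeff_apply, esym]
  simp_rw [isProperColoring_top_iff]
  split_ifs with hd
  · obtain ⟨hle, hsum⟩ := hd
    have hcard : Fintype.card V = Fintype.card d.support := by
      rw [← hsum, Finsupp.sum, Fintype.card_coe, card_eq_sum_ones]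
      exact sum_congr rfl fun i hi =>
        le_antisymm (hle i) (Nat.one_le_iff_ne_zero.2 (Finsupp.mem_support_iff.1 hi))
    rw [Nat.card_congr (injectiveColoringsEquiv hle), Nat.card_eq_fintype_card,
      Fintype.card_equiv (Fintype.equivOfCardEq hcard)]
    simp
  · have : IsEmpty {κ : V → ℕ // Function.Injective κ ∧ colorDegree κ = d} :=
      ⟨fun ⟨κ, hκ, hκd⟩ => hd ⟨hκd ▸ colorDegree_le_one_of_injective hκ, hκd ▸ colorDegree_sum κ⟩⟩
    simp

end CompleteGraph

theorem cycle_two_eq_top : cycle 2 = ⊤ := by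
  ext a b
  simp only [cycle, fromRel_adj, top_adj, Fin.ext_iff, ne_eq]
  omega

def tadpoleIsoPathSupEdge (m : ℕ) : tadpole 3 m ≃g path (m + 3) ⊔ edge 0 2 where
  toEquiv := finCongr (by omega)
  map_rel_iff' {a b} := by
    simp only [tadpole, path, sup_adj, edge_adj, fromRel_adj, ne_eq, Fin.ext_iff, finCongr_apply,
      Fin.val_cast, Fin.val_zero, Fin.val_two]
    omega

def cycleSumPathIsoPathSdiffEdge (m : ℕ) :
    cycle 2 ⊕g path (m + 1) ≃g path (m + 3) \ edge 1 2 where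
  toEquiv := finSumFinEquiv.trans (finCongr (by omega))
  map_rel_iff' {a b} := by
    rcases a with a | a <;> rcases b with b | b <;>
    simp only [cycle, path, sdiff_adj, edge_adj, fromRel_adj, ne_eq, Fin.ext_iff, finCongr_apply,
      Fin.val_cast, Fin.val_one, Fin.val_two, Equiv.trans_apply, finSumFinEquiv_apply_left,
      finSumFinEquiv_apply_right, Fin.val_castAdd, Fin.val_natAdd, sum_adj, iff_false] <;>
    omega

/-- Removing `{1, 2}` from the path and adding `{0, 2}` yields the path `1, 0, 2, 3, …`. -/
def pathSdiffEdgeSupEdgeIsoPath (m : ℕ) :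
    path (m + 3) \ edge 1 2 ⊔ edge 0 2 ≃g path (m + 3) where
  toEquiv := Equiv.swap 0 1
  map_rel_iff' {a b} := by
    simp only [path, sdiff_adj, sup_adj, edge_adj, fromRel_adj, ne_eq, Fin.ext_iff,
      Equiv.swap_apply_def, Fin.val_zero, Fin.val_one, Fin.val_two]
    split_ifs <;> (try simp only [Fin.val_zero, Fin.val_one, not_true_eq_false, false_and, true_or,
      or_true, and_true, false_iff]) <;> omega

theorem path_adj_one_two (m : ℕ) : (path (m + 3)).Adj 1 2 := by
  simp only [path, fromRel_adj, ne_eq, Fin.ext_iff, Fin.val_one, Fin.val_two]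
  decide

theorem path_sdiff_edge_sup_edge (m : ℕ) : path (m + 3) \ edge 1 2 ⊔ edge 1 2 = path (m + 3) :=
  sdiff_sup_cancel ((edge_le_iff _).2 (Or.inr (path_adj_one_two m)))

theorem csf_tadpole_three_general (m : ℕ) :
    csf (tadpole 3 m) = 2 * csf (path (m + 3)) - csf (cycle 2) * csf (path (m + 1)) ∧
    csf (cycle 2) = 2 * esym 2 := by
  set P := path (m + 3)
  set D := P \ edge 1 2
  set Y := colorSeries fun κ => IsProperColoring P κ ∧ κ 0 = κ 2
  have h02 : (0 : Fin (m + 3)) ≠ 2 := by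
    simp only [ne_eq, Fin.ext_iff, Fin.val_zero, Fin.val_two]
    decide
  have hD01 : D.Adj 0 1 := by
    simp only [D, P, path, sdiff_adj, edge_adj, fromRel_adj, ne_eq, Fin.ext_iff, Fin.val_zero,
      Fin.val_one, Fin.val_two]
    decide
  have hP : csf P = csf (tadpole 3 m) + Y := by
    rw [csf_eq_csf_sup_edge_add P h02, csf_congr (tadpoleIsoPathSupEdge m)]
  have hD : csf D = csf P + Y := by
    rw [csf_eq_csf_sup_edge_add D h02, csf_congr (pathSdiffEdgeSupEdgeIsoPath m),
      ← colorSeries_sup_edge_of_adj hD01, path_sdiff_edge_sup_edge]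
  have hK : csf (cycle 2) * csf (path (m + 1)) = csf D := by
    rw [← csf_sum, csf_congr (cycleSumPathIsoPathSdiffEdge m)]
  refine ⟨by linear_combination hK + hD - hP, ?_⟩
  rw [cycle_two_eq_top, csf_top]
  simp

/-- For every `m ≥ 1`,
`X_{T^{3,m}} = 2 X_{P_{m+3}} − X_{C_2} · X_{P_{m+1}}`, where `C_2 = K_2` is a single
edge and `X_{C_2} = 2 e_2`. -/
theorem csf_tadpole_three (m : ℕ) (hm : 1 ≤ m) :
    csf (tadpole 3 m) = 2 * csf (path (m + 3)) - csf (cycle 2) * csf (path (m + 1)) ∧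
    csf (cycle 2) = 2 * esym 2 :=
  csf_tadpole_three_general m
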